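/- arXiv:1910.02799 — 2 statements merged into one kernel-verified Lean document; each statement's English description precedes it below -/
import Mathlib

section
/- Discrete-time Caccioppoli inequality: there is a universal constant C such that for any ancient solution u : V × ℤ_{≤0} → ℝ of the discrete-time heat equation D_t u = Δu and any integer R ≥ s, R²·∑_{Q̃_R} Γ(u) + R⁴·∑_{Q̃_R} (D_t u)² ≤ C·∑_{Q̃_{9R}} u², where Q̃_r = B_r(x₀) × ([−r², 0] ∩ ℤ) and ∑_{Q̃_r} v = ∑_{t=−r²}^{0} ∑_{x∈B_r} v(x,t) m_x. -/
/-!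
Fix cutoffs `φ` of scale `R`; the intrinsic-metric bound turns their Lipschitz bound into
`∑_y w_xy (φ y - φ x)² ≤ m_x / R²`. Testing the heat equation at time `t` against `φ² u` and
summing by parts, Young's inequality gives
`∑ φ² |∇u(t)|² ≤ 4 (‖φ u(t-1)‖² - ‖φ u(t)‖²) + 8 R⁻² ‖u(t)‖²`;
testing against `ψ² D_t u` gives
`‖ψ D_t u(t)‖² ≤ ½ (H(t-1) - H(t)) + R⁻² ∑ η² |∇u(t)|²`, where `H` is the `ψ(x)ψ(y)`-weighted edge
energy and `η = 1` on the support of `ψ`. Both right-hand sides telescope in time, and averaging the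
starting time over a window of length `R²` disposes of the boundary term. Chaining the second
estimate into the first bounds `R⁴ ∑ (D_t u)²` by `∑ u²` on a larger cylinder.
-/

open Finset

theorem sum_Ioc_sub_eq (h : ℤ → ℝ) {a b : ℤ} (hab : a ≤ b) :
    ∑ t ∈ Ioc a b, (h (t - 1) - h t) = h a - h b := by
  induction b, hab using Int.leInduction with
  | base => simp
  | succ b hab ih =>
    rw [← insert_Ioc_right_eq_Ioc_add_one hab, sum_insert (by simp), ih, add_sub_cancel_right]
    ring

theorem sum_Ioc_le_of_step {e g h : ℤ → ℝ} {κ : ℝ} (hh0 : 0 ≤ h 0)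
    (hstep : ∀ t ≤ 0, e t ≤ h (t - 1) - h t + κ * g t) {σ : ℤ} (hσ : σ ≤ 0) :
    ∑ t ∈ Ioc σ 0, e t ≤ h σ + κ * ∑ t ∈ Ioc σ 0, g t := by
  calc ∑ t ∈ Ioc σ 0, e t ≤ ∑ t ∈ Ioc σ 0, (h (t - 1) - h t + κ * g t) :=
        sum_le_sum fun t ht => hstep t (mem_Ioc.1 ht).2
    _ = h σ - h 0 + κ * ∑ t ∈ Ioc σ 0, g t := by
        rw [sum_add_distrib, sum_Ioc_sub_eq h hσ, mul_sum]
    _ ≤ h σ + κ * ∑ t ∈ Ioc σ 0, g t := by linarith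

theorem mul_sum_Icc_le_of_step {e g h : ℤ → ℝ} {n : ℕ} {a : ℤ} {c : ℝ} (hn : 1 ≤ n)
    (ha : a ≤ 0) (hc : 0 ≤ c) (he : ∀ t, 0 ≤ e t) (hg : ∀ t, 0 ≤ g t) (hh0 : 0 ≤ h 0)
    (hhg : ∀ t, h t ≤ c * g t) (hstep : ∀ t ≤ 0, e t ≤ h (t - 1) - h t + c / n * g t) :
    n * ∑ t ∈ Icc a 0, e t ≤ 3 * c * ∑ t ∈ Icc (a - n - 1) 0, g t := by
  set G := ∑ t ∈ Icc (a - n - 1) 0, g t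
  have hG : ∀ σ ∈ Ico (a - n - 1) a, ∑ t ∈ Icc a 0, e t ≤ c * g σ + c / n * G := by
    intro σ hσ
    obtain ⟨hσ₁, hσ₂⟩ := mem_Ico.1 hσ
    have hsub : Ioc σ 0 ⊆ Icc (a - n - 1) 0 := fun t ht => by
      simp only [mem_Ioc, mem_Icc] at ht ⊢; omega
    calc ∑ t ∈ Icc a 0, e t ≤ ∑ t ∈ Ioc σ 0, e t :=
          sum_le_sum_of_subset_of_nonneg (fun t ht => by simp only [mem_Ioc, mem_Icc] at ht ⊢; omega)
            fun t _ _ => he t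
      _ ≤ h σ + c / n * ∑ t ∈ Ioc σ 0, g t := sum_Ioc_le_of_step hh0 hstep (by omega)
      _ ≤ c * g σ + c / n * G := by
          gcongr
          · exact hhg σ
          · exact sum_le_sum_of_subset_of_nonneg hsub fun t _ _ => hg t
  have hcard : (#(Ico (a - n - 1) a) : ℝ) = n + 1 := by
    rw [Int.card_Ico, show a - (a - n - 1) = ((n + 1 : ℕ) : ℤ) by push_cast; ring, Int.toNat_natCast]
    push_cast; ring
  have havg := card_nsmul_le_sum _ _ _ hG
  rw [nsmul_eq_mul, hcard, sum_add_distrib, sum_const, nsmul_eq_mul, hcard, ← mul_sum] at havg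
  have hwindow : ∑ σ ∈ Ico (a - n - 1) a, g σ ≤ G :=
    sum_le_sum_of_subset_of_nonneg (fun t ht => by simp only [mem_Ico, mem_Icc] at ht ⊢; omega)
      fun t _ _ => hg t
  have hn' : (1 : ℝ) ≤ n := by exact_mod_cast hn
  have hG0 : 0 ≤ G := sum_nonneg fun t _ => hg t
  have hcn : (n + 1 : ℝ) * (c / n) ≤ 2 * c := by
    rw [show (n + 1 : ℝ) * (c / n) = c + c / n by field_simp]
    linarith [div_le_self hc hn']
  nlinarith [mul_le_mul_of_nonneg_right hcn hG0, mul_le_mul_of_nonneg_left hwindow hc]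

theorem energy_pair_le (p q a b : ℝ) :
    p ^ 2 * (b - a) ^ 2 / 4 ≤
      (q ^ 2 * b - p ^ 2 * a) * (b - a) + a ^ 2 * (q - p) ^ 2 + b ^ 2 * (p - q) ^ 2 := by
  nlinarith [sq_nonneg ((q + p) * (b - a) + 2 * (b + a) * (q - p)), sq_nonneg (q * (b - a)),
    sq_nonneg ((q - p) * (b - a)), mul_nonneg (sq_nonneg (b - a)) (sq_nonneg (q - p))]

theorem mul_le_sq_div_add_mul_sq {κ : ℝ} (hκ : 0 < κ) (X Y : ℝ) :
    X * Y ≤ X ^ 2 / (2 * κ) + κ * Y ^ 2 / 2 := by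
  have h : X ^ 2 / (2 * κ) + κ * Y ^ 2 / 2 - X * Y = (X - κ * Y) ^ 2 / (2 * κ) := by
    field_simp; ring
  rw [← sub_nonneg, h]
  positivity

-- Split along `p²D₁ - q²D₂ = pq (D₁ - D₂) + (p - q)(pD₁ + qD₂)`; the first part telescopes in time,
-- the second is absorbed by Young's inequality, with `e₁, e₂` marking the supports of `p, q`.
theorem time_derivative_pair_le {p q e₁ e₂ a₁ a₂ b₁ b₂ κ : ℝ} (hκ : 0 < κ) (hpq : 0 ≤ p * q)
    (he₁ : e₁ * p = p) (he₂ : e₂ * q = q) :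
    (p ^ 2 * (a₁ - b₁) - q ^ 2 * (a₂ - b₂)) * (a₂ - a₁) ≤
      p * q * ((b₂ - b₁) ^ 2 - (a₂ - a₁) ^ 2) / 2
        + ((p * (a₁ - b₁)) ^ 2 * (q - p) ^ 2 / (2 * κ) + κ * e₁ ^ 2 * (a₂ - a₁) ^ 2 / 2)
        + ((q * (a₂ - b₂)) ^ 2 * (p - q) ^ 2 / (2 * κ) + κ * e₂ ^ 2 * (a₁ - a₂) ^ 2 / 2) := by
  have hx := mul_le_sq_div_add_mul_sq hκ (p * (a₁ - b₁) * (p - q)) (e₁ * (a₂ - a₁))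
  have hy := mul_le_sq_div_add_mul_sq hκ (q * (a₂ - b₂) * (q - p)) (e₂ * (a₁ - a₂))
  have hxy : p * q * ((b₂ - b₁) - (a₂ - a₁)) * (a₂ - a₁) ≤
      p * q * ((b₂ - b₁) ^ 2 - (a₂ - a₁) ^ 2) / 2 := by
    nlinarith [mul_nonneg hpq (sq_nonneg ((b₂ - b₁) - (a₂ - a₁)))]
  linear_combination hx + hy + hxy - (a₁ - b₁) * (p - q) * (a₂ - a₁) * he₁
    - (a₂ - b₂) * (q - p) * (a₁ - a₂) * he₂

section WeightedSums

variable {V : Type*} {S : Finset V} {w : V → V → ℝ} {m : V → ℝ}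

def energyOn (S : Finset V) (w : V → V → ℝ) (f : V → ℝ) (x : V) : ℝ :=
  ∑ y ∈ S, w x y * (f y - f x) ^ 2

theorem energyOn_nonneg (hw0 : ∀ x y, 0 ≤ w x y) (f : V → ℝ) (x : V) : 0 ≤ energyOn S w f x :=
  sum_nonneg fun y _ => mul_nonneg (hw0 x y) (sq_nonneg _)

def cutoffEnergy (S : Finset V) (w : V → V → ℝ) (ψ f : V → ℝ) : ℝ :=
  ∑ x ∈ S, ∑ y ∈ S, w x y * (ψ x * ψ y * (f y - f x) ^ 2)

theorem cutoffEnergy_nonneg {ψ : V → ℝ} (hw0 : ∀ x y, 0 ≤ w x y) (hψ0 : ∀ x, 0 ≤ ψ x)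
    (f : V → ℝ) : 0 ≤ cutoffEnergy S w ψ f :=
  sum_nonneg fun x _ => sum_nonneg fun y _ =>
    mul_nonneg (hw0 x y) (mul_nonneg (mul_nonneg (hψ0 x) (hψ0 y)) (sq_nonneg _))

theorem cutoffEnergy_le {ψ η : V → ℝ} (hw0 : ∀ x y, 0 ≤ w x y) (hψ0 : ∀ x, 0 ≤ ψ x)
    (hψ1 : ∀ x, ψ x ≤ 1) (hη : ∀ x, ψ x ≠ 0 → η x = 1) (f : V → ℝ) :
    cutoffEnergy S w ψ f ≤ ∑ x ∈ S, η x ^ 2 * energyOn S w f x := by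
  refine sum_le_sum fun x _ => ?_
  rw [energyOn, mul_sum]
  refine sum_le_sum fun y _ => ?_
  have hψψ : ψ x * ψ y ≤ η x ^ 2 := by
    by_cases hψx : ψ x = 0
    · rw [hψx, zero_mul]; positivity
    · rw [hη x hψx, one_pow]; exact mul_le_one₀ (hψ1 x) (hψ0 y) (hψ1 y)
  have := mul_le_mul_of_nonneg_right hψψ (mul_nonneg (hw0 x y) (sq_nonneg (f y - f x)))
  linarith

theorem sum_sum_mul_comm (hw : ∀ x y, w x y = w y x) (F : V → V → ℝ) :
    ∑ x ∈ S, ∑ y ∈ S, w x y * F x y = ∑ x ∈ S, ∑ y ∈ S, w x y * F y x := by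
  rw [sum_comm]
  exact sum_congr rfl fun x _ => sum_congr rfl fun y _ => by rw [hw]

theorem sum_mul_sum_sub_eq (hw : ∀ x y, w x y = w y x) (f g : V → ℝ) :
    ∑ x ∈ S, f x * ∑ y ∈ S, w x y * (g y - g x) =
      -(1 / 2) * ∑ x ∈ S, ∑ y ∈ S, w x y * ((f y - f x) * (g y - g x)) := by
  have hswap := sum_sum_mul_comm (S := S) hw fun x y => f x * (g y - g x)
  have hlhs : ∑ x ∈ S, f x * ∑ y ∈ S, w x y * (g y - g x) =
      ∑ x ∈ S, ∑ y ∈ S, w x y * (f x * (g y - g x)) :=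
    sum_congr rfl fun x _ => by rw [mul_sum]; exact sum_congr rfl fun y _ => by ring
  have hzero : ∑ x ∈ S, ∑ y ∈ S, w x y * ((f y - f x) * (g y - g x)) +
      ∑ x ∈ S, ∑ y ∈ S, w x y * (f y * (g x - g y)) +
      ∑ x ∈ S, ∑ y ∈ S, w x y * (f x * (g y - g x)) = 0 := by
    simp only [← sum_add_distrib]
    exact sum_eq_zero fun x _ => sum_eq_zero fun y _ => by ring
  linarith

theorem sum_sum_mul_le_of_le_add_swap (hw : ∀ x y, w x y = w y x) (hw0 : ∀ x y, 0 ≤ w x y)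
    {F T G : V → V → ℝ} (h : ∀ x y, F x y ≤ T x y + G x y + G y x) :
    ∑ x ∈ S, ∑ y ∈ S, w x y * F x y ≤
      ∑ x ∈ S, ∑ y ∈ S, w x y * T x y + 2 * ∑ x ∈ S, ∑ y ∈ S, w x y * G x y := by
  have hswap := sum_sum_mul_comm (S := S) hw G
  calc ∑ x ∈ S, ∑ y ∈ S, w x y * F x y
      ≤ ∑ x ∈ S, ∑ y ∈ S, (w x y * T x y + w x y * G x y + w x y * G y x) :=
        sum_le_sum fun x _ => sum_le_sum fun y _ => by
          rw [← mul_add, ← mul_add]; exact mul_le_mul_of_nonneg_left (h x y) (hw0 x y)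
    _ = _ := by simp only [sum_add_distrib]; rw [← hswap]; ring

theorem sum_sq_mul_energyOn_le {a b φ : V → ℝ} {κ : ℝ} (hw : ∀ x y, w x y = w y x)
    (hw0 : ∀ x y, 0 ≤ w x y) (hm : ∀ x, 0 ≤ m x)
    (hheat : ∀ x ∈ S, φ x ≠ 0 → (a x - b x) * m x = ∑ y ∈ S, w x y * (a y - a x))
    (hφ : ∀ x ∈ S, ∑ y ∈ S, w x y * (φ y - φ x) ^ 2 ≤ κ * m x) :
    ∑ x ∈ S, φ x ^ 2 * energyOn S w a x ≤
      4 * ∑ x ∈ S, φ x ^ 2 * (b x ^ 2 - a x ^ 2) * m x + 8 * κ * ∑ x ∈ S, a x ^ 2 * m x := by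
  have htested : ∑ x ∈ S, φ x ^ 2 * a x * ((a x - b x) * m x) =
      -(1 / 2) * ∑ x ∈ S, ∑ y ∈ S, w x y * ((φ y ^ 2 * a y - φ x ^ 2 * a x) * (a y - a x)) := by
    rw [← sum_mul_sum_sub_eq hw]
    refine sum_congr rfl fun x hx => ?_
    by_cases hφx : φ x = 0
    · simp [hφx]
    · rw [hheat x hx hφx]
  have hpairs := sum_sum_mul_le_of_le_add_swap (S := S) hw hw0 fun x y =>
    energy_pair_le (φ x) (φ y) (a x) (a y)
  have henergy : ∑ x ∈ S, ∑ y ∈ S, w x y * (φ x ^ 2 * (a y - a x) ^ 2 / 4) =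
      (∑ x ∈ S, φ x ^ 2 * energyOn S w a x) / 4 := by
    rw [sum_div]
    refine sum_congr rfl fun x _ => ?_
    rw [energyOn, mul_sum, sum_div]
    exact sum_congr rfl fun y _ => by ring
  have herror : ∑ x ∈ S, ∑ y ∈ S, w x y * (a x ^ 2 * (φ y - φ x) ^ 2) ≤
      κ * ∑ x ∈ S, a x ^ 2 * m x := by
    rw [mul_sum]
    refine sum_le_sum fun x hx => ?_
    calc ∑ y ∈ S, w x y * (a x ^ 2 * (φ y - φ x) ^ 2)
        = a x ^ 2 * ∑ y ∈ S, w x y * (φ y - φ x) ^ 2 := by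
          rw [mul_sum]; exact sum_congr rfl fun y _ => by ring
      _ ≤ a x ^ 2 * (κ * m x) := mul_le_mul_of_nonneg_left (hφ x hx) (sq_nonneg _)
      _ = κ * (a x ^ 2 * m x) := by ring
  have htime : -2 * ∑ x ∈ S, φ x ^ 2 * a x * ((a x - b x) * m x) ≤
      ∑ x ∈ S, φ x ^ 2 * (b x ^ 2 - a x ^ 2) * m x := by
    rw [mul_sum]
    refine sum_le_sum fun x _ => ?_
    nlinarith [mul_nonneg (mul_nonneg (sq_nonneg (φ x)) (sq_nonneg (a x - b x))) (hm x)]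
  linarith

theorem sum_sum_cutoff_error_le {a D ψ η : V → ℝ} {κ : ℝ} (hκ : 0 < κ)
    (hψ : ∀ x ∈ S, ∑ y ∈ S, w x y * (ψ y - ψ x) ^ 2 ≤ κ * m x) :
    ∑ x ∈ S, ∑ y ∈ S, w x y * ((ψ x * D x) ^ 2 * (ψ y - ψ x) ^ 2 / (2 * κ)
      + κ * η x ^ 2 * (a y - a x) ^ 2 / 2) ≤
        (∑ x ∈ S, ψ x ^ 2 * (D x ^ 2 * m x)) / 2 +
          κ / 2 * ∑ x ∈ S, η x ^ 2 * energyOn S w a x := by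
  rw [sum_div, mul_sum, ← sum_add_distrib]
  refine sum_le_sum fun x hx => ?_
  have hsplit : ∑ y ∈ S, w x y * ((ψ x * D x) ^ 2 * (ψ y - ψ x) ^ 2 / (2 * κ)
      + κ * η x ^ 2 * (a y - a x) ^ 2 / 2) =
        (ψ x * D x) ^ 2 / (2 * κ) * ∑ y ∈ S, w x y * (ψ y - ψ x) ^ 2
          + κ / 2 * (η x ^ 2 * energyOn S w a x) := by
    rw [energyOn, mul_sum, mul_sum, mul_sum, ← sum_add_distrib]
    exact sum_congr rfl fun y _ => by ring
  have hcut := mul_le_mul_of_nonneg_left (hψ x hx) (by positivity : 0 ≤ (ψ x * D x) ^ 2 / (2 * κ))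
  have hκm : (ψ x * D x) ^ 2 / (2 * κ) * (κ * m x) = ψ x ^ 2 * (D x ^ 2 * m x) / 2 := by
    field_simp
  linarith

theorem sum_sq_mul_sq_sub_le {a b ψ η : V → ℝ} {κ : ℝ} (hw : ∀ x y, w x y = w y x)
    (hw0 : ∀ x y, 0 ≤ w x y) (hκ : 0 < κ) (hψ0 : ∀ x, 0 ≤ ψ x) (hη : ∀ x, ψ x ≠ 0 → η x = 1)
    (hheat : ∀ x ∈ S, ψ x ≠ 0 → (a x - b x) * m x = ∑ y ∈ S, w x y * (a y - a x))
    (hψ : ∀ x ∈ S, ∑ y ∈ S, w x y * (ψ y - ψ x) ^ 2 ≤ κ * m x) :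
    ∑ x ∈ S, ψ x ^ 2 * ((a x - b x) ^ 2 * m x) ≤
      cutoffEnergy S w ψ b / 2 - cutoffEnergy S w ψ a / 2 +
        κ * ∑ x ∈ S, η x ^ 2 * energyOn S w a x := by
  set Q := ∑ x ∈ S, ψ x ^ 2 * ((a x - b x) ^ 2 * m x)
  have hηψ : ∀ x, η x * ψ x = ψ x := fun x => by
    by_cases hψx : ψ x = 0
    · rw [hψx, mul_zero]
    · rw [hη x hψx, one_mul]
  have htested : Q = -(1 / 2) * ∑ x ∈ S, ∑ y ∈ S,
      w x y * ((ψ y ^ 2 * (a y - b y) - ψ x ^ 2 * (a x - b x)) * (a y - a x)) := by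
    rw [← sum_mul_sum_sub_eq hw]
    refine sum_congr rfl fun x hx => ?_
    by_cases hψx : ψ x = 0
    · simp [hψx]
    · rw [← hheat x hx hψx]; ring
  have hflip : ∑ x ∈ S, ∑ y ∈ S,
      w x y * ((ψ x ^ 2 * (a x - b x) - ψ y ^ 2 * (a y - b y)) * (a y - a x)) = 2 * Q := by
    rw [htested, mul_sum, mul_sum]
    exact sum_congr rfl fun x _ => by rw [mul_sum, mul_sum]; exact sum_congr rfl fun y _ => by ring
  have hpairs := sum_sum_mul_le_of_le_add_swap (S := S) hw hw0 fun x y =>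
    time_derivative_pair_le (a₁ := a x) (a₂ := a y) (b₁ := b x) (b₂ := b y) hκ
      (mul_nonneg (hψ0 x) (hψ0 y)) (hηψ x) (hηψ y)
  have htelescope : ∑ x ∈ S, ∑ y ∈ S,
      w x y * (ψ x * ψ y * ((b y - b x) ^ 2 - (a y - a x) ^ 2) / 2) =
        cutoffEnergy S w ψ b / 2 - cutoffEnergy S w ψ a / 2 := by
    rw [cutoffEnergy, cutoffEnergy, sum_div, sum_div, ← sum_sub_distrib]
    exact sum_congr rfl fun x _ => by
      rw [sum_div, sum_div, ← sum_sub_distrib]; exact sum_congr rfl fun y _ => by ring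
  have herror := sum_sum_cutoff_error_le (a := a) (D := fun x => a x - b x) (η := η) hκ hψ
  beta_reduce at herror
  linarith

theorem energy_caccioppoli (hw : ∀ x y, w x y = w y x) (hw0 : ∀ x y, 0 ≤ w x y)
    (hm : ∀ x, 0 ≤ m x) {u : V → ℤ → ℝ} {φ : V → ℝ} {n : ℕ} (hn : 1 ≤ n)
    (hφ0 : ∀ x, 0 ≤ φ x) (hφ1 : ∀ x, φ x ≤ 1)
    (hheat : ∀ t ≤ 0, ∀ x ∈ S, φ x ≠ 0 →
      (u x t - u x (t - 1)) * m x = ∑ y ∈ S, w x y * (u y t - u x t))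
    (hφ : ∀ x ∈ S, ∑ y ∈ S, w x y * (φ y - φ x) ^ 2 ≤ 1 / n * m x) {a : ℤ} (ha : a ≤ 0) :
    n * ∑ t ∈ Icc a 0, ∑ x ∈ S, φ x ^ 2 * energyOn S w (fun z => u z t) x ≤
      24 * ∑ t ∈ Icc (a - n - 1) 0, ∑ x ∈ S, u x t ^ 2 * m x := by
  set U := fun t => ∑ x ∈ S, u x t ^ 2 * m x
  set h := fun t => 4 * ∑ x ∈ S, φ x ^ 2 * u x t ^ 2 * m x
  have hU : ∀ t, 0 ≤ U t := fun t => sum_nonneg fun x _ => mul_nonneg (sq_nonneg _) (hm x)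
  have hh : ∀ t, 0 ≤ h t := fun t =>
    mul_nonneg zero_le_four (sum_nonneg fun x _ => by have := hm x; positivity)
  have hhU : ∀ t, h t ≤ 8 * U t := fun t => by
    have : ∑ x ∈ S, φ x ^ 2 * u x t ^ 2 * m x ≤ U t := sum_le_sum fun x _ => by
      have := mul_le_mul_of_nonneg_right (pow_le_one₀ (n := 2) (hφ0 x) (hφ1 x))
        (mul_nonneg (sq_nonneg (u x t)) (hm x))
      linarith
    linarith [hU t]
  have hstep : ∀ t ≤ 0, ∑ x ∈ S, φ x ^ 2 * energyOn S w (fun z => u z t) x ≤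
      h (t - 1) - h t + 8 / n * U t := fun t ht => by
    have key := sum_sq_mul_energyOn_le (a := fun z => u z t) (b := fun z => u z (t - 1))
      hw hw0 hm (hheat t ht) hφ
    have hsplit : ∑ x ∈ S, φ x ^ 2 * (u x (t - 1) ^ 2 - u x t ^ 2) * m x =
        ∑ x ∈ S, φ x ^ 2 * u x (t - 1) ^ 2 * m x - ∑ x ∈ S, φ x ^ 2 * u x t ^ 2 * m x := by
      rw [← sum_sub_distrib]; exact sum_congr rfl fun x _ => by ring
    simp only [h, U] at key ⊢
    rw [hsplit, mul_one_div] at key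
    linarith
  calc n * ∑ t ∈ Icc a 0, ∑ x ∈ S, φ x ^ 2 * energyOn S w (fun z => u z t) x
      ≤ 3 * 8 * ∑ t ∈ Icc (a - n - 1) 0, U t :=
        mul_sum_Icc_le_of_step hn ha (by norm_num)
          (fun t => sum_nonneg fun x _ => mul_nonneg (sq_nonneg _) (energyOn_nonneg hw0 _ x))
          hU (hh 0) hhU hstep
    _ = 24 * ∑ t ∈ Icc (a - n - 1) 0, ∑ x ∈ S, u x t ^ 2 * m x := by norm_num [U]

theorem time_derivative_caccioppoli (hw : ∀ x y, w x y = w y x) (hw0 : ∀ x y, 0 ≤ w x y)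
    (hm : ∀ x, 0 ≤ m x) {u : V → ℤ → ℝ} {ψ η : V → ℝ} {n : ℕ} (hn : 1 ≤ n)
    (hψ0 : ∀ x, 0 ≤ ψ x) (hψ1 : ∀ x, ψ x ≤ 1) (hη : ∀ x, ψ x ≠ 0 → η x = 1)
    (hheat : ∀ t ≤ 0, ∀ x ∈ S, ψ x ≠ 0 →
      (u x t - u x (t - 1)) * m x = ∑ y ∈ S, w x y * (u y t - u x t))
    (hψ : ∀ x ∈ S, ∑ y ∈ S, w x y * (ψ y - ψ x) ^ 2 ≤ 1 / n * m x) {a : ℤ} (ha : a ≤ 0) :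
    n * ∑ t ∈ Icc a 0, ∑ x ∈ S, ψ x ^ 2 * ((u x t - u x (t - 1)) ^ 2 * m x) ≤
      3 * ∑ t ∈ Icc (a - n - 1) 0, ∑ x ∈ S, η x ^ 2 * energyOn S w (fun z => u z t) x := by
  have hn' : (0 : ℝ) < n := by exact_mod_cast hn
  have hH : ∀ t, 0 ≤ cutoffEnergy S w ψ (fun z => u z t) := fun t =>
    cutoffEnergy_nonneg hw0 hψ0 _
  have hHE : ∀ t, cutoffEnergy S w ψ (fun z => u z t) / 2 ≤
      1 * ∑ x ∈ S, η x ^ 2 * energyOn S w (fun z => u z t) x := fun t => by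
    linarith [cutoffEnergy_le (S := S) hw0 hψ0 hψ1 hη (fun z => u z t), hH t]
  calc n * ∑ t ∈ Icc a 0, ∑ x ∈ S, ψ x ^ 2 * ((u x t - u x (t - 1)) ^ 2 * m x)
      ≤ 3 * 1 * ∑ t ∈ Icc (a - n - 1) 0, ∑ x ∈ S, η x ^ 2 * energyOn S w (fun z => u z t) x :=
        mul_sum_Icc_le_of_step hn ha zero_le_one
          (fun t => sum_nonneg fun x _ => by have := hm x; positivity)
          (fun t => sum_nonneg fun x _ => mul_nonneg (sq_nonneg _) (energyOn_nonneg hw0 _ x))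
          (by linarith [hH 0]) hHE fun t ht =>
            sum_sq_mul_sq_sub_le (a := fun z => u z t) (b := fun z => u z (t - 1)) hw hw0
              (one_div_pos.2 hn') hψ0 hη (hheat t ht) hψ
    _ = _ := by rw [mul_one]

theorem caccioppoli_of_cutoffs (hw : ∀ x y, w x y = w y x) (hw0 : ∀ x y, 0 ≤ w x y)
    (hm : ∀ x, 0 ≤ m x) {u : V → ℤ → ℝ} {φ ψ : V → ℝ} {n : ℕ} (hn : 1 ≤ n)
    (hφ0 : ∀ x, 0 ≤ φ x) (hφ1 : ∀ x, φ x ≤ 1) (hψ0 : ∀ x, 0 ≤ ψ x) (hψ1 : ∀ x, ψ x ≤ 1)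
    (hψφ : ∀ x, ψ x ≠ 0 → φ x = 1)
    (hheat : ∀ t ≤ 0, ∀ x ∈ S, φ x ≠ 0 →
      (u x t - u x (t - 1)) * m x = ∑ y ∈ S, w x y * (u y t - u x t))
    (hφ : ∀ x ∈ S, ∑ y ∈ S, w x y * (φ y - φ x) ^ 2 ≤ 1 / n * m x)
    (hψ : ∀ x ∈ S, ∑ y ∈ S, w x y * (ψ y - ψ x) ^ 2 ≤ 1 / n * m x) :
    n * (∑ t ∈ Icc (-(n : ℤ)) 0, ∑ x ∈ S, φ x ^ 2 * energyOn S w (fun z => u z t) x) / 2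
      + n * n * ∑ t ∈ Icc (-(n : ℤ)) 0, ∑ x ∈ S, ψ x ^ 2 * ((u x t - u x (t - 1)) ^ 2 * m x)
      ≤ 84 * ∑ t ∈ Icc (-3 * n - 2 : ℤ) 0, ∑ x ∈ S, u x t ^ 2 * m x := by
  have hU : ∀ a : ℤ, -3 * n - 2 ≤ a → ∑ t ∈ Icc a 0, ∑ x ∈ S, u x t ^ 2 * m x ≤
      ∑ t ∈ Icc (-3 * n - 2 : ℤ) 0, ∑ x ∈ S, u x t ^ 2 * m x := fun a ha =>
    sum_le_sum_of_subset_of_nonneg (Icc_subset_Icc ha le_rfl) fun t _ _ =>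
      sum_nonneg fun x _ => mul_nonneg (sq_nonneg _) (hm x)
  have hE₁ := energy_caccioppoli (a := -n) hw hw0 hm hn hφ0 hφ1 hheat hφ (by omega)
  have hE₂ := energy_caccioppoli (a := -n - n - 1) hw hw0 hm hn hφ0 hφ1 hheat hφ (by omega)
  have hD := time_derivative_caccioppoli (a := -n) hw hw0 hm hn hψ0 hψ1 hψφ
    (fun t ht x hx hψx => hheat t ht x hx (by rw [hψφ x hψx]; exact one_ne_zero)) hψ (by omega)
  have hDE := mul_le_mul_of_nonneg_left hD n.cast_nonneg
  have hU₁ := hU (-n - n - 1) (by omega)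
  have hU₂ := hU (-n - n - 1 - n - 1) (by omega)
  linarith

end WeightedSums

section Cutoff

variable {V : Type*}

theorem finsum_mul_eq_sum_of_subset {w : V → ℝ} {S : Finset V} (hS : ∀ y, w y ≠ 0 → y ∈ S)
    (g : V → ℝ) : ∑ᶠ y, w y * g y = ∑ y ∈ S, w y * g y :=
  finsum_eq_sum_of_support_subset _ fun y hy => hS y (left_ne_zero_of_mul hy)

theorem sum_mul_le_finsum_mul {w g : V → ℝ} (hfin : {y | w y ≠ 0}.Finite) (hw0 : ∀ y, 0 ≤ w y)
    (hg : ∀ y, 0 ≤ g y) (S : Finset V) : ∑ y ∈ S, w y * g y ≤ ∑ᶠ y, w y * g y := by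
  classical
  rw [finsum_mul_eq_sum_of_subset (S := S ∪ hfin.toFinset)
    fun y hy => mem_union_right _ (hfin.mem_toFinset.2 hy)]
  exact sum_le_sum_of_subset_of_nonneg subset_union_left fun y _ _ => mul_nonneg (hw0 y) (hg y)

theorem sum_le_sum_sq_mul_of_eq_one {B S : Finset V} {φ g : V → ℝ} (hBS : B ⊆ S)
    (hφ : ∀ x ∈ B, φ x = 1) (hg : ∀ x ∈ S, 0 ≤ g x) :
    ∑ x ∈ B, g x ≤ ∑ x ∈ S, φ x ^ 2 * g x :=
  calc ∑ x ∈ B, g x = ∑ x ∈ B, φ x ^ 2 * g x :=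
        sum_congr rfl fun x hx => by rw [hφ x hx, one_pow, one_mul]
    _ ≤ ∑ x ∈ S, φ x ^ 2 * g x :=
        sum_le_sum_of_subset_of_nonneg hBS fun x hx _ => mul_nonneg (sq_nonneg _) (hg x hx)

theorem sum_finsum_sq_sub_le_sum_sq_mul_energyOn {w : V → V → ℝ} {m φ f : V → ℝ}
    {B S : Finset V} (hw0 : ∀ x y, 0 ≤ w x y) (hm : ∀ x, m x ≠ 0) (hBS : B ⊆ S)
    (hφ : ∀ x ∈ B, φ x = 1) (hnbr : ∀ x ∈ B, ∀ y, w x y ≠ 0 → y ∈ S) :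
    ∑ x ∈ B, (1 / (2 * m x) * ∑ᶠ y, w x y * (f y - f x) ^ 2) * m x ≤
      (∑ x ∈ S, φ x ^ 2 * energyOn S w f x) / 2 := by
  have hB : ∀ x ∈ B, (1 / (2 * m x) * ∑ᶠ y, w x y * (f y - f x) ^ 2) * m x =
      energyOn S w f x / 2 := fun x hx => by
    rw [finsum_mul_eq_sum_of_subset (hnbr x hx), energyOn]
    field_simp [hm x]
  rw [sum_congr rfl hB, ← sum_div]
  gcongr
  exact sum_le_sum_sq_mul_of_eq_one hBS hφ fun x _ => energyOn_nonneg hw0 f x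

variable {ρ : V → V → ℝ} {x₀ : V} {r k : ℝ}

noncomputable def cutoff (ρ : V → V → ℝ) (x₀ : V) (r k : ℝ) (x : V) : ℝ :=
  max 0 (min 1 (k + 1 - ρ x x₀ / r))

theorem cutoff_nonneg (x : V) : 0 ≤ cutoff ρ x₀ r k x := le_max_left _ _

theorem cutoff_le_one (x : V) : cutoff ρ x₀ r k x ≤ 1 := max_le zero_le_one (min_le_left _ _)

theorem cutoff_eq_one (hr : 0 < r) {x : V} (hx : ρ x x₀ ≤ k * r) : cutoff ρ x₀ r k x = 1 := by
  have : 1 ≤ k + 1 - ρ x x₀ / r := by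
    have := (div_le_iff₀ hr).2 hx
    linarith
  rw [cutoff, min_eq_left this, max_eq_right zero_le_one]

theorem le_of_cutoff_ne_zero (hr : 0 < r) {x : V} (hx : cutoff ρ x₀ r k x ≠ 0) :
    ρ x x₀ ≤ (k + 1) * r := by
  by_contra! h
  have : k + 1 - ρ x x₀ / r ≤ 0 := by
    have := (lt_div_iff₀ hr).2 h
    linarith
  exact hx (max_eq_left (min_le_of_right_le this))

theorem abs_cutoff_sub_cutoff_le (hr : 0 < r) (hρ : ∀ x y, ρ x y = ρ y x)
    (htri : ∀ x y z, ρ x z ≤ ρ x y + ρ y z) (x y : V) :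
    |cutoff ρ x₀ r k x - cutoff ρ x₀ r k y| ≤ ρ x y / r := by
  have hdist : |ρ y x₀ - ρ x x₀| ≤ ρ x y := abs_sub_le_iff.2
    ⟨by linarith [htri y x x₀, hρ y x], by linarith [htri x y x₀]⟩
  calc |cutoff ρ x₀ r k x - cutoff ρ x₀ r k y|
      ≤ |min 1 (k + 1 - ρ x x₀ / r) - min 1 (k + 1 - ρ y x₀ / r)| := by
        rw [cutoff, cutoff, max_comm 0, max_comm 0]; exact abs_max_sub_max_le_abs _ _ _
    _ ≤ |(k + 1 - ρ x x₀ / r) - (k + 1 - ρ y x₀ / r)| := by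
        simpa using abs_min_sub_min_le_max 1 (k + 1 - ρ x x₀ / r) 1 (k + 1 - ρ y x₀ / r)
    _ = |ρ y x₀ - ρ x x₀| / r := by
        rw [← abs_of_pos hr, ← abs_div, abs_of_pos hr]; congr 1; ring
    _ ≤ ρ x y / r := by gcongr

theorem sum_mul_sq_cutoff_sub_le {w : V → V → ℝ} {m : V → ℝ} (hr : 0 < r)
    (hρ : ∀ x y, ρ x y = ρ y x) (htri : ∀ x y z, ρ x z ≤ ρ x y + ρ y z)
    (hw0 : ∀ x y, 0 ≤ w x y) (hfin : ∀ x, {y | w x y ≠ 0}.Finite)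
    (hmass : ∀ x, ∑ᶠ y, w x y * ρ x y ^ 2 ≤ m x) (S : Finset V) (x : V) :
    ∑ y ∈ S, w x y * (cutoff ρ x₀ r k y - cutoff ρ x₀ r k x) ^ 2 ≤ 1 / r ^ 2 * m x := by
  have hsq : ∀ y, (cutoff ρ x₀ r k y - cutoff ρ x₀ r k x) ^ 2 ≤ 1 / r ^ 2 * ρ x y ^ 2 := by
    intro y
    have h := abs_le.1 (abs_cutoff_sub_cutoff_le (x₀ := x₀) (k := k) hr hρ htri y x)
    rw [hρ y x] at h
    calc (cutoff ρ x₀ r k y - cutoff ρ x₀ r k x) ^ 2 ≤ (ρ x y / r) ^ 2 := sq_le_sq' h.1 h.2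
      _ = 1 / r ^ 2 * ρ x y ^ 2 := by ring
  calc ∑ y ∈ S, w x y * (cutoff ρ x₀ r k y - cutoff ρ x₀ r k x) ^ 2
      ≤ 1 / r ^ 2 * ∑ y ∈ S, w x y * ρ x y ^ 2 := by
        rw [mul_sum]
        exact sum_le_sum fun y _ => by
          have := mul_le_mul_of_nonneg_left (hsq y) (hw0 x y); linarith
    _ ≤ 1 / r ^ 2 * m x := by
        gcongr
        exact (sum_mul_le_finsum_mul (hfin x) (hw0 x) (fun y => sq_nonneg _) S).trans (hmass x)

end Cutoff

theorem caccioppoli_of_one_le {V : Type*} {w : V → V → ℝ} {m : V → ℝ} {ρ : V → V → ℝ} {x₀ : V}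
    {s : ℝ} {u : V → ℤ → ℝ} {R : ℕ} {B S : Finset V}
    (hw : ∀ x y, w x y = w y x) (hw0 : ∀ x y, 0 ≤ w x y) (hfin : ∀ x, {y | w x y ≠ 0}.Finite)
    (hm : ∀ x, 0 < m x) (hρ : ∀ x y, ρ x y = ρ y x) (htri : ∀ x y z, ρ x z ≤ ρ x y + ρ y z)
    (hmass : ∀ x, ∑ᶠ y, w x y * ρ x y ^ 2 ≤ m x) (hjump : ∀ x y, w x y ≠ 0 → ρ x y ≤ s)
    (hu : ∀ x, ∀ t ≤ 0, u x t - u x (t - 1) = (∑ᶠ y, w x y * (u y t - u x t)) / m x)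
    (hR : 1 ≤ R) (hsR : s ≤ R) (hB : ∀ x, x ∈ B ↔ ρ x x₀ ≤ R)
    (hS : ∀ x, x ∈ S ↔ ρ x x₀ ≤ 9 * R) :
    (R : ℝ) ^ 2 * (∑ t ∈ Icc (-(R : ℤ) ^ 2) 0,
        ∑ x ∈ B, ((1 / (2 * m x)) * ∑ᶠ y, w x y * (u y t - u x t) ^ 2) * m x)
      + (R : ℝ) ^ 4 * (∑ t ∈ Icc (-(R : ℤ) ^ 2) 0, ∑ x ∈ B, (u x t - u x (t - 1)) ^ 2 * m x)
      ≤ 84 * ∑ t ∈ Icc (-(9 * (R : ℤ)) ^ 2) 0, ∑ x ∈ S, u x t ^ 2 * m x := by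
  set n := R ^ 2
  have hnR : (n : ℝ) = (R : ℝ) ^ 2 := by push_cast [n]; rfl
  have hnZ : (n : ℤ) = (R : ℤ) ^ 2 := by push_cast [n]; rfl
  have hRpos : (0 : ℝ) < R := by exact_mod_cast hR
  have hm0 : ∀ x, 0 ≤ m x := fun x => (hm x).le
  have hnbr : ∀ x, ρ x x₀ ≤ 8 * R → ∀ y, w x y ≠ 0 → y ∈ S := fun x hx y hxy => by
    rw [hS]; linarith [htri y x x₀, hρ y x, hjump x y hxy]
  have hB₁ : ∀ x ∈ B, ρ x x₀ ≤ 1 * R := fun x hx => by linarith [(hB x).1 hx]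
  have hBS : B ⊆ S := fun x hx => by rw [hS]; linarith [hB₁ x hx]
  have hcut : ∀ k, ∀ x ∈ S, ∑ y ∈ S, w x y * (cutoff ρ x₀ R k y - cutoff ρ x₀ R k x) ^ 2 ≤
      1 / n * m x := fun k x _ => by
    rw [hnR]; exact sum_mul_sq_cutoff_sub_le hRpos hρ htri hw0 hfin hmass S x
  have key := caccioppoli_of_cutoffs (u := u) hw hw0 hm0 (Nat.one_le_pow _ _ hR) cutoff_nonneg
    cutoff_le_one cutoff_nonneg cutoff_le_one
    (fun x hx => cutoff_eq_one hRpos (by linarith [le_of_cutoff_ne_zero hRpos hx]))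
    (fun t ht x _ hx => by
      have hxR : ρ x x₀ ≤ 8 * R := by linarith [le_of_cutoff_ne_zero hRpos hx]
      rw [hu x t ht, finsum_mul_eq_sum_of_subset (hnbr x hxR), div_mul_cancel₀ _ (hm x).ne'])
    (hcut 2) (hcut 1)
  have hΓ : ∑ t ∈ Icc (-(n : ℤ)) 0,
      ∑ x ∈ B, ((1 / (2 * m x)) * ∑ᶠ y, w x y * (u y t - u x t) ^ 2) * m x ≤
        (∑ t ∈ Icc (-(n : ℤ)) 0,
          ∑ x ∈ S, cutoff ρ x₀ R 2 x ^ 2 * energyOn S w (fun z => u z t) x) / 2 := by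
    rw [sum_div]
    exact sum_le_sum fun t _ => sum_finsum_sq_sub_le_sum_sq_mul_energyOn (f := fun z => u z t)
      hw0 (fun x => (hm x).ne') hBS (fun x hx => cutoff_eq_one hRpos (by linarith [hB₁ x hx]))
      fun x hx => hnbr x (by linarith [hB₁ x hx])
  have hDt : ∑ t ∈ Icc (-(n : ℤ)) 0, ∑ x ∈ B, (u x t - u x (t - 1)) ^ 2 * m x ≤
      ∑ t ∈ Icc (-(n : ℤ)) 0,
        ∑ x ∈ S, cutoff ρ x₀ R 1 x ^ 2 * ((u x t - u x (t - 1)) ^ 2 * m x) :=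
    sum_le_sum fun t _ => sum_le_sum_sq_mul_of_eq_one hBS
      (fun x hx => cutoff_eq_one hRpos (hB₁ x hx)) fun x _ => mul_nonneg (sq_nonneg _) (hm0 x)
  have hX : ∑ t ∈ Icc (-3 * n - 2 : ℤ) 0, ∑ x ∈ S, u x t ^ 2 * m x ≤
      ∑ t ∈ Icc (-(9 * (R : ℤ)) ^ 2) 0, ∑ x ∈ S, u x t ^ 2 * m x :=
    sum_le_sum_of_subset_of_nonneg (Icc_subset_Icc (by nlinarith) le_rfl) fun t _ _ =>
      sum_nonneg fun x _ => mul_nonneg (sq_nonneg _) (hm0 x)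
  have hn0 : (0 : ℝ) ≤ n := n.cast_nonneg
  have hΓn := mul_le_mul_of_nonneg_left hΓ hn0
  have hDn := mul_le_mul_of_nonneg_left hDt (mul_nonneg hn0 hn0)
  rw [← hnZ, show (R : ℝ) ^ 4 = n * n by rw [hnR]; ring, ← hnR]
  linarith

/-- Discrete-time Caccioppoli inequality: there is a universal constant C such that for any
weighted graph with an intrinsic metric with finite balls and jump size s, any ancient solution
u of the discrete-time heat equation D_t u = Δu and any integer R ≥ s,
R² ∑_{Q̃_R} Γ(u) + R⁴ ∑_{Q̃_R} (D_t u)² ≤ C ∑_{Q̃_{9R}} u². -/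
theorem discrete_caccioppoli :
    ∃ C : ℝ, 0 < C ∧
    ∀ (V : Type) (w : V → V → ℝ) (m : V → ℝ) (ρ : V → V → ℝ) (x₀ : V) (s : ℝ),
      (∀ x y, w x y = w y x) → (∀ x y, 0 ≤ w x y) →
      (∀ x, {y | w x y ≠ 0}.Finite) → (∀ x, 0 < m x) →
      (∀ x y, ρ x y = ρ y x) → (∀ x y, 0 ≤ ρ x y) → (∀ x, ρ x x = 0) →
      (∀ x y z, ρ x z ≤ ρ x y + ρ y z) →
      (∀ x, ∑ᶠ y : V, w x y * ρ x y ^ 2 ≤ m x) →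
      ∀ hball : ∀ (x : V) (r : ℝ), {y | ρ y x ≤ r}.Finite,
      (∀ x y, w x y ≠ 0 → ρ x y ≤ s) →
      ∀ u : V → ℤ → ℝ,
        (∀ (x : V) (t : ℤ), t ≤ 0 →
          u x t - u x (t - 1) = (∑ᶠ y : V, w x y * (u y t - u x t)) / m x) →
      ∀ R : ℕ, s ≤ (R : ℝ) →
        (R : ℝ) ^ 2 * (∑ t ∈ Finset.Icc (-(R : ℤ) ^ 2) 0,
            ∑ x ∈ (hball x₀ (R : ℝ)).toFinset,
              ((1 / (2 * m x)) * ∑ᶠ y : V, w x y * (u y t - u x t) ^ 2) * m x)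
        + (R : ℝ) ^ 4 * (∑ t ∈ Finset.Icc (-(R : ℤ) ^ 2) 0,
            ∑ x ∈ (hball x₀ (R : ℝ)).toFinset, (u x t - u x (t - 1)) ^ 2 * m x)
        ≤ C * ∑ t ∈ Finset.Icc (-(9 * (R : ℤ)) ^ 2) 0,
            ∑ x ∈ (hball x₀ (9 * (R : ℝ))).toFinset, (u x t) ^ 2 * m x := by
  refine ⟨84, by norm_num, ?_⟩
  intro V w m ρ x₀ s hw hw0 hfin hm hρ _ _ htri hmass hball hjump u hu R hsR
  rcases Nat.eq_zero_or_pos R with rfl | hR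
  · calc _ = (0 : ℝ) := by simp
      _ ≤ _ := mul_nonneg (by norm_num)
        (sum_nonneg fun t _ => sum_nonneg fun x _ => mul_nonneg (sq_nonneg _) (hm x).le)
  · exact caccioppoli_of_one_le hw hw0 hfin hm hρ htri hmass hjump hu hR hsR
      (fun x => (hball x₀ _).mem_toFinset) (fun x => (hball x₀ _).mem_toFinset)
end

section
/- If u(x,t) = ∑_{i=0}^{l} p_i(x)·C(−t, i) for (x,t) ∈ V × ℤ_{≤0} is an ancient solution of the discrete-time heat equation D_t u = Δu, then Δp_l = 0 and Δp_i = −p_{i+1} for 0 ≤ i ≤ l−1. -/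
/-!
Substituting `t = -n` turns the heat equation into an identity between polynomials in `n`
written in the binomial basis `n.choose i`. By Pascal's rule the backward difference
`u(t) - u(t - 1)` shifts the coefficients down by one, while the Laplacian acts
coefficientwise; since the binomials `n.choose i` are linearly independent as functions of
`n`, the coefficients on both sides agree.
-/

open Finset

theorem eq_zero_of_forall_sum_mul_choose_eq_zero {R : Type*} [Semiring R] {N : ℕ} {c : ℕ → R}
    (h : ∀ n : ℕ, ∑ i ∈ range N, c i * (n.choose i : R) = 0) : ∀ i < N, c i = 0 := by
  intro i
  induction i using Nat.strong_induction_on with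
  | _ i ih =>
    intro hi
    -- at `n = i` the lower coefficients vanish by induction and the higher binomials vanish
    rw [← h i, sum_eq_single_of_mem i (mem_range.2 hi)]
    · simp
    · intro j _ hji
      rcases lt_or_gt_of_ne hji with hlt | hgt
      · rw [ih j hlt (hlt.trans hi), zero_mul]
      · rw [Nat.choose_eq_zero_of_lt hgt, Nat.cast_zero, mul_zero]

theorem sum_mul_choose_succ {R : Type*} [Semiring R] (a : ℕ → R) (N n : ℕ) :
    ∑ i ∈ range (N + 1), a i * ((n + 1).choose i : R)
      = ∑ i ∈ range (N + 1), a i * (n.choose i : R)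
        + ∑ i ∈ range N, a (i + 1) * (n.choose i : R) := by
  simp only [sum_range_succ' _ N, Nat.choose_succ_succ, Nat.cast_add, mul_add, sum_add_distrib,
    Nat.choose_zero_right]
  abel

section Laplacian

variable {V : Type*} (w : V → V → ℝ) (m : V → ℝ)

noncomputable def graphLaplacian (f : V → ℝ) (x : V) : ℝ :=
  (∑ᶠ y : V, w x y * (f y - f x)) / m x

variable {w}

theorem graphLaplacian_sum_mul {x : V} (hx : {y | w x y ≠ 0}.Finite) {ι : Type*} (s : Finset ι)
    (c : ι → ℝ) (f : ι → V → ℝ) :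
    graphLaplacian w m (fun y => ∑ i ∈ s, f i y * c i) x
      = ∑ i ∈ s, graphLaplacian w m (f i) x * c i := by
  have hfin : ∀ g : V → ℝ, ∑ᶠ y, w x y * g y = ∑ y ∈ hx.toFinset, w x y * g y := fun g =>
    finsum_eq_sum_of_support_subset _ fun y hy => by simpa using left_ne_zero_of_mul hy
  simp only [graphLaplacian, hfin, sum_div, sum_mul]
  rw [sum_comm]
  refine sum_congr rfl fun y _ => ?_
  rw [← sum_sub_distrib, mul_sum, sum_div]
  exact sum_congr rfl fun i _ => by ring

end Laplacian

theorem sum_graphLaplacian_mul_choose_eq_neg_shift {V : Type*} {w : V → V → ℝ} {m : V → ℝ}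
    {x : V} (hx : {y | w x y ≠ 0}.Finite) {l : ℕ} {p : ℕ → V → ℝ} {u : V → ℤ → ℝ}
    (hu : ∀ (x : V) (t : ℤ), t ≤ 0 →
      u x t = ∑ i ∈ range (l + 1), p i x * ((-t).toNat.choose i : ℝ))
    (hheat : ∀ t : ℤ, t ≤ 0 → u x t - u x (t - 1) = graphLaplacian w m (fun y => u y t) x)
    (n : ℕ) :
    ∑ i ∈ range (l + 1), graphLaplacian w m (p i) x * (n.choose i : ℝ)
      = -∑ i ∈ range l, p (i + 1) x * (n.choose i : ℝ) := by
  have hun : ∀ y, u y (-n) = ∑ i ∈ range (l + 1), p i y * (n.choose i : ℝ) := fun y => by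
    simp [hu y (-n) (by omega)]
  have hun1 : u x (-n - 1) = ∑ i ∈ range (l + 1), p i x * ((n + 1).choose i : ℝ) := by
    rw [hu x _ (by omega), show (-(-(n : ℤ) - 1)).toNat = n + 1 by omega]
  have heat := hheat (-n) (by omega)
  rw [hun1, hun, funext hun, graphLaplacian_sum_mul m hx, sum_mul_choose_succ] at heat
  linarith

theorem binomial_ancient_solution_coefficients_general
    (V : Type*) (w : V → V → ℝ) (m : V → ℝ)
    (hloc : ∀ x, {y | w x y ≠ 0}.Finite)
    (l : ℕ) (p : ℕ → V → ℝ) (u : V → ℤ → ℝ)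
    (hu : ∀ (x : V) (t : ℤ), t ≤ 0 →
      u x t = ∑ i ∈ Finset.range (l + 1), p i x * ((-t).toNat.choose i : ℝ))
    (hheat : ∀ (x : V) (t : ℤ), t ≤ 0 →
      u x t - u x (t - 1) = (∑ᶠ y : V, w x y * (u y t - u x t)) / m x) :
    (∀ x, (∑ᶠ y : V, w x y * (p l y - p l x)) / m x = 0) ∧
    ∀ i < l, ∀ x, (∑ᶠ y : V, w x y * (p i y - p i x)) / m x = -p (i + 1) x := by
  have key : ∀ x, ∀ i < l + 1,
      graphLaplacian w m (p i) x + (if i < l then p (i + 1) x else 0) = 0 := by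
    intro x
    refine eq_zero_of_forall_sum_mul_choose_eq_zero fun n => ?_
    have hshift : ∑ i ∈ range (l + 1), (if i < l then p (i + 1) x else 0) * (n.choose i : ℝ)
        = ∑ i ∈ range l, p (i + 1) x * (n.choose i : ℝ) := by
      rw [sum_range_succ, if_neg (lt_irrefl l), zero_mul, add_zero]
      exact sum_congr rfl fun i hi => by rw [if_pos (mem_range.1 hi)]
    rw [sum_congr rfl fun i _ => add_mul _ _ _, sum_add_distrib, hshift,
      sum_graphLaplacian_mul_choose_eq_neg_shift (hloc x) hu (hheat x) n, neg_add_cancel]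
  refine ⟨fun x => ?_, fun i hi x => ?_⟩
  · have h := key x l l.lt_succ_self
    rwa [if_neg (lt_irrefl l), add_zero] at h
  · have h := key x i (by omega)
    rwa [if_pos hi, add_eq_zero_iff_eq_neg] at h

/-- If u(x,t) = ∑_{i=0}^{l} p_i(x) C(−t, i) is an ancient solution of the discrete-time heat
equation D_t u = Δu on V × ℤ_{≤0}, then Δp_l = 0 and Δp_i = −p_{i+1} for 0 ≤ i ≤ l−1. -/
theorem binomial_ancient_solution_coefficients
    (V : Type*) (w : V → V → ℝ) (m : V → ℝ)
    (hwsymm : ∀ x y, w x y = w y x) (hwnn : ∀ x y, 0 ≤ w x y)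
    (hloc : ∀ x, {y | w x y ≠ 0}.Finite) (hm : ∀ x, 0 < m x)
    (l : ℕ) (p : ℕ → V → ℝ) (u : V → ℤ → ℝ)
    (hu : ∀ (x : V) (t : ℤ), t ≤ 0 →
      u x t = ∑ i ∈ Finset.range (l + 1), p i x * ((-t).toNat.choose i : ℝ))
    (hheat : ∀ (x : V) (t : ℤ), t ≤ 0 →
      u x t - u x (t - 1) = (∑ᶠ y : V, w x y * (u y t - u x t)) / m x) :
    (∀ x, (∑ᶠ y : V, w x y * (p l y - p l x)) / m x = 0) ∧
    ∀ i < l, ∀ x, (∑ᶠ y : V, w x y * (p i y - p i x)) / m x = -p (i + 1) x :=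
  binomial_ancient_solution_coefficients_general V w m hloc l p u hu hheat
end
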